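/- The similarity transform of the tangential Jacobian B by the eigenvectors of A yields the stated non-diagonal matrix: P⁻¹ B P = Θ, where Θ has rows (u_t, 0, -ρ c², 0), (0, u_t, 0, 0), (-1/(2ρ), 0, u_t, -1/(2ρ)), (0, 0, -ρ c², u_t). -/

import Mathlib

/-!
Write `Θ` for the claimed matrix. It suffices that `P⁻¹` really is a left inverse of `P` and
that `B P = P Θ`, i.e. `B` maps each eigenvector of the normal Jacobian to the combination of
eigenvectors recorded in the corresponding column of `Θ`. Entrywise, both are rational identities
that hold modulo `n_x² + n_y² = 1`.
-/

open Matrix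

section EulerJacobians

variable {K : Type*} [Field K]

def tangentialJacobian (γ ux uy tx ty ut uu H : K) : Matrix (Fin 4) (Fin 4) K :=
  !![0, tx, ty, 0;
    (γ-1)/2*uu*tx - ux*ut, ut - (γ-2)*ux*tx, ux*ty - (γ-1)*uy*tx, (γ-1)*tx;
    (γ-1)/2*uu*ty - uy*ut, uy*tx - (γ-1)*ux*ty, ut - (γ-2)*uy*ty, (γ-1)*ty;
    ((γ-1)/2*uu - H)*ut, H*tx - (γ-1)*ux*ut, H*ty - (γ-1)*uy*ut, γ*ut]

def eigenvectorMatrix (ρ c γ ux uy nx ny un uu : K) : Matrix (Fin 4) (Fin 4) K :=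
  !![1/(2*c^2), 1/c^2, 0, 1/(2*c^2);
    -nx/(2*c) + ux/(2*c^2), ux/c^2, ρ*ny, nx/(2*c) + ux/(2*c^2);
    -ny/(2*c) + uy/(2*c^2), uy/c^2, -ρ*nx, ny/(2*c) + uy/(2*c^2);
    1/(2*(γ-1)) - un/(2*c) + uu/(4*c^2), uu/(2*c^2), ρ*ux*ny - ρ*uy*nx,
      1/(2*(γ-1)) + un/(2*c) + uu/(4*c^2)]

def eigenvectorMatrixInv (ρ c γ ux uy nx ny un uu : K) : Matrix (Fin 4) (Fin 4) K :=
  !![c*un + (γ-1)*uu/2, -c*nx + ux*(1-γ), -c*ny + uy*(1-γ), γ-1;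
    c^2 - (γ-1)*uu/2, -(ux*(1-γ)), -(uy*(1-γ)), 1-γ;
    -(ux*ny)/ρ + (uy*nx)/ρ, ny/ρ, -nx/ρ, 0;
    -(c*un) + (γ-1)*uu/2, c*nx + ux*(1-γ), c*ny + uy*(1-γ), γ-1]

def transformedTangentialJacobian (ρ c ut : K) : Matrix (Fin 4) (Fin 4) K :=
  !![ut, 0, -(ρ*c^2), 0;
    0, ut, 0, 0;
    -(1/(2*ρ)), 0, ut, -(1/(2*ρ));
    0, 0, -(ρ*c^2), ut]

variable [CharZero K] {ρ c γ ux uy nx ny tx ty un ut uu H : K}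

theorem eigenvectorMatrixInv_mul_eigenvectorMatrix (hρ : ρ ≠ 0) (hc : c ≠ 0) (hγ : γ ≠ 1)
    (hn : nx^2 + ny^2 = 1) (hun : un = ux*nx + uy*ny) (huu : uu = ux^2 + uy^2) :
    eigenvectorMatrixInv ρ c γ ux uy nx ny un uu * eigenvectorMatrix ρ c γ ux uy nx ny un uu =
      1 := by
  have hγ' : γ - 1 ≠ 0 := sub_ne_zero.2 hγ
  subst hun huu
  ext i j
  fin_cases i <;> fin_cases j <;>
    simp only [eigenvectorMatrix, eigenvectorMatrixInv, Fin.zero_eta, Fin.mk_one, Fin.reduceFinMk,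
      mul_apply, Fin.sum_univ_four, of_apply, cons_val, one_apply, Fin.reduceEq, ↓reduceIte] <;>
    field_simp <;> grind

theorem tangentialJacobian_mul_eigenvectorMatrix (hρ : ρ ≠ 0) (hc : c ≠ 0) (hγ : γ ≠ 1)
    (hn : nx^2 + ny^2 = 1) (htx : tx = -ny) (hty : ty = nx) (hun : un = ux*nx + uy*ny)
    (hut : ut = ux*tx + uy*ty) (huu : uu = ux^2 + uy^2) (hH : H = c^2/(γ-1) + uu/2) :
    tangentialJacobian γ ux uy tx ty ut uu H * eigenvectorMatrix ρ c γ ux uy nx ny un uu =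
      eigenvectorMatrix ρ c γ ux uy nx ny un uu * transformedTangentialJacobian ρ c ut := by
  have hγ' : γ - 1 ≠ 0 := sub_ne_zero.2 hγ
  subst htx hty hun hut huu hH
  ext i j
  fin_cases i <;> fin_cases j <;>
    simp only [tangentialJacobian, eigenvectorMatrix, transformedTangentialJacobian,
      Fin.zero_eta, Fin.mk_one, Fin.reduceFinMk, mul_apply, Fin.sum_univ_four, of_apply,
      cons_val] <;>
    field_simp <;> grind

end EulerJacobians

theorem similarity_transform_B
    (ρ c γ ux uy nx ny tx ty un ut uu H : ℝ)
    (hρ : 0 < ρ) (hc : 0 < c) (hγ : 1 < γ)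
    (hn : nx^2 + ny^2 = 1)
    (htx : tx = -ny) (hty : ty = nx)
    (hun : un = ux*nx + uy*ny) (hut : ut = ux*tx + uy*ty)
    (huu : uu = ux^2 + uy^2)
    (hH : H = c^2/(γ-1) + uu/2)
    (B P Pinv : Matrix (Fin 4) (Fin 4) ℝ)
    (hB : B = !![0, tx, ty, 0;
      (γ-1)/2*uu*tx - ux*ut, ut - (γ-2)*ux*tx, ux*ty - (γ-1)*uy*tx, (γ-1)*tx;
      (γ-1)/2*uu*ty - uy*ut, uy*tx - (γ-1)*ux*ty, ut - (γ-2)*uy*ty, (γ-1)*ty;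
      ((γ-1)/2*uu - H)*ut, H*tx - (γ-1)*ux*ut, H*ty - (γ-1)*uy*ut, γ*ut])
    (hP : P = !![1/(2*c^2), 1/c^2, 0, 1/(2*c^2);
      -nx/(2*c) + ux/(2*c^2), ux/c^2, ρ*ny, nx/(2*c) + ux/(2*c^2);
      -ny/(2*c) + uy/(2*c^2), uy/c^2, -ρ*nx, ny/(2*c) + uy/(2*c^2);
      1/(2*(γ-1)) - un/(2*c) + uu/(4*c^2), uu/(2*c^2), ρ*ux*ny - ρ*uy*nx, 1/(2*(γ-1)) + un/(2*c) + uu/(4*c^2)])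
    (hPinv : Pinv = !![c*un + (γ-1)*uu/2, -c*nx + ux*(1-γ), -c*ny + uy*(1-γ), γ-1;
      c^2 - (γ-1)*uu/2, -(ux*(1-γ)), -(uy*(1-γ)), 1-γ;
      -(ux*ny)/ρ + (uy*nx)/ρ, ny/ρ, -nx/ρ, 0;
      -(c*un) + (γ-1)*uu/2, c*nx + ux*(1-γ), c*ny + uy*(1-γ), γ-1]) :
    Pinv * B * P =
      !![ut, 0, -(ρ*c^2), 0;
         0, ut, 0, 0;
         -(1/(2*ρ)), 0, ut, -(1/(2*ρ));
         0, 0, -(ρ*c^2), ut] := by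
  have hinv : Pinv * P = 1 := by
    rw [hPinv, hP]
    exact eigenvectorMatrixInv_mul_eigenvectorMatrix hρ.ne' hc.ne' hγ.ne' hn hun huu
  have hBP : B * P = P * transformedTangentialJacobian ρ c ut := by
    rw [hB, hP]
    exact tangentialJacobian_mul_eigenvectorMatrix hρ.ne' hc.ne' hγ.ne' hn htx hty hun hut huu hH
  calc Pinv * B * P = Pinv * P * transformedTangentialJacobian ρ c ut := by
        rw [Matrix.mul_assoc, hBP, ← Matrix.mul_assoc]
    _ = transformedTangentialJacobian ρ c ut := by rw [hinv, Matrix.one_mul]
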